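/- arXiv:0809.3643 — 6 statements merged into one kernel-verified Lean document; each statement's English description precedes it below -/
import Mathlib

section
/- If a compact body K in Euclidean space E^n is such that every point of its boundary lies in a supporting hyperplane half-space (i.e., K lies on one side of a hyperplane through each boundary point), and K is connected with nonempty interior, then K is convex. -/
open scoped RealInnerProductSpace

/-!
Take `a` in the interior of `K` and suppose a point `p` of a segment `[x, y]` with `x, y ∈ K`
lies outside `K`. The segment `[a, p]` leaves `K`, so it meets the frontier of `K` at some
`z ≠ a, p`. A supporting functional `f` at `z` satisfies `f ≤ f z` on `K`, hence at `p`, and the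
half-space `{f ≤ f z}` contains `a` in its interior; the open segment `(a, p)` then lies in that
interior, which contradicts `z ∈ (a, p)` lying on the bounding hyperplane `f = f z`.
-/

theorem IsPreconnected.inter_frontier_nonempty {X : Type*} [TopologicalSpace X] {s t : Set X}
    (hs : IsPreconnected s) (hst : (s ∩ t).Nonempty) (hs_t : (s \ t).Nonempty) :
    (s ∩ frontier t).Nonempty := by
  by_contra hempty
  have hcover : s ⊆ interior t ∪ interior tᶜ := by
    rw [← compl_frontier_eq_union_interior]
    exact fun x hxs hxt => hempty ⟨x, hxs, hxt⟩
  obtain hsub | hsub := hs.subset_or_subset isOpen_interior isOpen_interior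
    (disjoint_compl_right.mono interior_subset interior_subset) hcover
  · obtain ⟨x, hxs, hxt⟩ := hs_t
    exact hxt (interior_subset (hsub hxs))
  · obtain ⟨x, hxs, hxt⟩ := hst
    exact interior_subset (hsub hxs) hxt

section SupportedSets

variable {E : Type*} [AddCommGroup E] [Module ℝ E] [TopologicalSpace E]
  [IsTopologicalAddGroup E] [ContinuousSMul ℝ E]

theorem ContinuousLinearMap.apply_lt_of_mem_interior {f : StrongDual ℝ E} (hf : f ≠ 0)
    {K : Set E} {c : ℝ} (hK : ∀ y ∈ K, f y ≤ c) {a : E} (ha : a ∈ interior K) : f a < c := by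
  have hopen : IsOpen (f '' interior K) := f.isOpenMap_of_ne_zero hf _ isOpen_interior
  have hsub : f '' interior K ⊆ Set.Iic c := by
    rintro _ ⟨y, hy, rfl⟩
    exact hK y (interior_subset hy)
  simpa using interior_maximal hsub hopen (Set.mem_image_of_mem f ha)

theorem convex_of_isClosed_of_forall_mem_frontier_supported {K : Set E} (hK : IsClosed K)
    (hint : (interior K).Nonempty)
    (hsupp : ∀ z ∈ frontier K, ∃ f : StrongDual ℝ E, f ≠ 0 ∧ ∀ y ∈ K, f y ≤ f z) :
    Convex ℝ K := by
  refine convex_iff_segment_subset.2 fun x hx y hy p hp => ?_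
  by_contra hpK
  obtain ⟨a, ha⟩ := hint
  obtain ⟨z, hza, hzfr⟩ := (convex_segment a p).isPreconnected.inter_frontier_nonempty
    ⟨a, left_mem_segment ℝ a p, interior_subset ha⟩ ⟨p, right_mem_segment ℝ a p, hpK⟩
  obtain ⟨f, hf, hfK⟩ := hsupp z hzfr
  have hz_open : z ∈ openSegment ℝ a p := by
    refine mem_openSegment_of_ne_left_right ?_ ?_ hza
    · rintro rfl
      exact hzfr.2 ha
    · rintro rfl
      exact hpK (hK.frontier_subset hzfr)
  have hHalf : Convex ℝ {u | f u ≤ f z} := convex_halfSpace_le f.isLinear (f z)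
  have hfp : f p ≤ f z := hHalf.segment_subset (hfK x hx) (hfK y hy) hp
  have hz_int : z ∈ interior {u | f u ≤ f z} :=
    hHalf.openSegment_interior_closure_subset_interior (interior_mono hfK ha)
      (subset_closure hfp) hz_open
  exact lt_irrefl _ (f.apply_lt_of_mem_interior hf (fun _ hu => hu) hz_int)

end SupportedSets

theorem stmt_0_general (n : ℕ) (K : Set (EuclideanSpace ℝ (Fin n)))
    (hcomp : IsCompact K)
    (hint : (interior K).Nonempty)
    (hsupp : ∀ x ∈ frontier K, ∃ v : EuclideanSpace ℝ (Fin n), v ≠ 0 ∧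
      ∀ y ∈ K, ⟪v, y⟫ ≤ ⟪v, x⟫) :
    Convex ℝ K := by
  refine convex_of_isClosed_of_forall_mem_frontier_supported hcomp.isClosed hint fun z hz => ?_
  obtain ⟨v, hv, hvK⟩ := hsupp z hz
  refine ⟨innerSL ℝ v, ?_, fun y hy => by simpa only [innerSL_apply_apply] using hvK y hy⟩
  rwa [← norm_ne_zero_iff, innerSL_apply_norm, norm_ne_zero_iff]

/-- A connected compact body in `E^n`, every frontier point of which lies in a supporting
hyperplane (so that `K` lies in one of the closed half-spaces it bounds), is convex. -/
theorem stmt_0 (n : ℕ) (K : Set (EuclideanSpace ℝ (Fin n)))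
    (hcomp : IsCompact K) (hbody : K = closure (interior K))
    (hint : (interior K).Nonempty) (hconn : IsConnected K)
    (hsupp : ∀ x ∈ frontier K, ∃ v : EuclideanSpace ℝ (Fin n), v ≠ 0 ∧
      ∀ y ∈ K, ⟪v, y⟫ ≤ ⟪v, x⟫) :
    Convex ℝ K :=
  stmt_0_general n K hcomp hint hsupp
end

section
/- The class K^k_2 is contained in the class K^k_1. Precisely: let K be a compact set in E^n with the property that for every point x not in K there exists a k-dimensional affine subspace P containing x such that P bounds a closed half-(k+1)-plane disjoint from K. Then for every point x in the frontier of K there exists a k-dimensional affine subspace through x whose associated closed half-(k+1)-plane is supporting K (meets frontier K and is disjoint from the interior of K). -/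
/-!
Describe a closed half-plane by a base point `y`, an orthonormal frame `e` of its boundary
direction and a unit normal `v`. The frames `(e, v)` form a compact set and, for fixed
coefficients `(c, t)`, the point `y + ∑ j, c j • e j + t • v` depends continuously on
`(y, e, v)`; hence the base points of half-planes avoiding the open set `interior K` form a
closed set. By hypothesis it contains `Kᶜ`, so it contains every frontier point `x`, and the
half-plane based at `x` meets the frontier at `x` itself.
-/

open Set RealInnerProductSpace

/-- The closed half-`(k+1)`-plane determined by an affine subspace `P` and a vector `v`
orthogonal to the direction of `P`. -/
def halfPlane {n : ℕ} (P : AffineSubspace ℝ (EuclideanSpace ℝ (Fin n)))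
    (v : EuclideanSpace ℝ (Fin n)) : Set (EuclideanSpace ℝ (Fin n)) :=
  {z | ∃ p ∈ P, ∃ t : ℝ, 0 ≤ t ∧ z = p + t • v}

theorem IsClosed.isClosed_image_fst_of_isCompact {X Y : Type*} [TopologicalSpace X]
    [TopologicalSpace Y] {S : Set (X × Y)} {L : Set Y} (hS : IsClosed S) (hL : IsCompact L)
    (hSL : ∀ p ∈ S, p.2 ∈ L) : IsClosed (Prod.fst '' S) := by
  have := isCompact_iff_compactSpace.mp hL
  have hS' : IsClosed (Prod.map id Subtype.val ⁻¹' S : Set (X × L)) :=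
    hS.preimage (continuous_id.prodMap continuous_subtype_val)
  convert isClosedMap_fst_of_compactSpace _ hS' using 1
  ext x
  constructor
  · rintro ⟨⟨x, y⟩, hxy, rfl⟩
    exact ⟨⟨x, y, hSL _ hxy⟩, hxy, rfl⟩
  · rintro ⟨⟨x, y⟩, hxy, rfl⟩
    exact ⟨⟨x, y⟩, hxy, rfl⟩

section Frames

variable {E : Type*} [NormedAddCommGroup E] [InnerProductSpace ℝ E] {ι : Type*}

theorem isClosed_setOf_orthonormal : IsClosed {e : ι → E | Orthonormal ℝ e} := by
  classical
  have hset : {e : ι → E | Orthonormal ℝ e} =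
      ⋂ (i) (j), {e | ⟪e i, e j⟫ = if i = j then 1 else 0} := by
    ext e
    simp [orthonormal_iff_ite]
  rw [hset]
  exact isClosed_iInter fun i => isClosed_iInter fun j =>
    isClosed_eq (by fun_prop) continuous_const

theorem mem_orthogonal_span_range_iff {e : ι → E} {v : E} :
    v ∈ (Submodule.span ℝ (range e))ᗮ ↔ ∀ j, ⟪e j, v⟫ = 0 := by
  rw [← Submodule.span_singleton_le_iff_mem, ← Submodule.isOrtho_iff_le, Submodule.isOrtho_span]
  simp [real_inner_comm]

theorem finrank_span_range_orthonormal {k : ℕ} {e : Fin k → E} (he : Orthonormal ℝ e) :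
    Module.finrank ℝ (Submodule.span ℝ (range e)) = k := by
  rw [finrank_span_eq_card he.linearIndependent, Fintype.card_fin]

theorem exists_orthonormal_eq_mk'_span [FiniteDimensional ℝ E] {k : ℕ}
    {P : AffineSubspace ℝ E} {y : E} (hy : y ∈ P) (hk : Module.finrank ℝ P.direction = k) :
    ∃ e : Fin k → E, Orthonormal ℝ e ∧
      P = AffineSubspace.mk' y (Submodule.span ℝ (range e)) := by
  subst hk
  let b := stdOrthonormalBasis ℝ P.direction
  refine ⟨fun j => b j, b.orthonormal.comp_linearIsometry P.direction.subtypeₗᵢ, ?_⟩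
  have hspan : Submodule.span ℝ (range fun j => (b j : E)) = P.direction := by
    rw [range_comp' Subtype.val b, ← Submodule.coe_subtype, Submodule.span_image,
      ← b.coe_toBasis, b.toBasis.span_eq, Submodule.map_top, Submodule.range_subtype]
  rw [hspan, AffineSubspace.mk'_eq hy]

def IsNormalFrame (e : ι → E) (v : E) : Prop :=
  Orthonormal ℝ e ∧ ‖v‖ = 1 ∧ ∀ j, ⟪e j, v⟫ = 0

theorem isClosed_setOf_isNormalFrame : IsClosed {p : (ι → E) × E | IsNormalFrame p.1 p.2} := by
  simp only [IsNormalFrame, ofPred_and, ofPred_forall]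
  exact (isClosed_setOf_orthonormal.preimage continuous_fst).inter
    ((isClosed_eq (by fun_prop) continuous_const).inter
      (isClosed_iInter fun j => isClosed_eq (by fun_prop) continuous_const))

theorem IsNormalFrame.mem_closedBall [Fintype ι] {e : ι → E} {v : E}
    (h : IsNormalFrame e v) :
    (e, v) ∈ Metric.closedBall (0 : (ι → E) × E) 1 := by
  rw [mem_closedBall_zero_iff, Prod.norm_def, max_le_iff, pi_norm_le_iff_of_nonneg zero_le_one]
  exact ⟨fun j => (h.1.1 j).le, h.2.1.le⟩

variable [Fintype ι]

def frameHalfPlane (y : E) (e : ι → E) (v : E) : Set E :=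
  {z | ∃ (c : ι → ℝ) (t : ℝ), 0 ≤ t ∧ z = y + ∑ j, c j • e j + t • v}

theorem isClosed_setOf_disjoint_frameHalfPlane {U : Set E} (hU : IsOpen U) :
    IsClosed {q : E × (ι → E) × E | Disjoint (frameHalfPlane q.1 q.2.1 q.2.2) U} := by
  have hset : {q : E × (ι → E) × E | Disjoint (frameHalfPlane q.1 q.2.1 q.2.2) U} =
      ⋂ (c : ι → ℝ) (t : ℝ) (_ : 0 ≤ t),
        (fun q : E × (ι → E) × E => q.1 + ∑ j, c j • q.2.1 j + t • q.2.2) ⁻¹' Uᶜ := by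
    ext q
    simp only [frameHalfPlane, disjoint_left, mem_ofPred_eq, mem_iInter, mem_preimage,
      mem_compl_iff]
    exact ⟨fun h c t ht => h ⟨c, t, ht, rfl⟩, fun h _ ⟨c, t, ht, hz⟩ => hz ▸ h c t ht⟩
  rw [hset]
  exact isClosed_iInter fun c => isClosed_iInter fun t => isClosed_iInter fun _ =>
    hU.isClosed_compl.preimage (by fun_prop)

theorem isClosed_setOf_exists_disjoint_frameHalfPlane [FiniteDimensional ℝ E]
    {U : Set E} (hU : IsOpen U) :
    IsClosed {y : E | ∃ (e : ι → E) (v : E),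
      IsNormalFrame e v ∧ Disjoint (frameHalfPlane y e v) U} := by
  have hset : {y : E | ∃ (e : ι → E) (v : E),
      IsNormalFrame e v ∧ Disjoint (frameHalfPlane y e v) U} = Prod.fst ''
        {q : E × (ι → E) × E | IsNormalFrame q.2.1 q.2.2 ∧
          Disjoint (frameHalfPlane q.1 q.2.1 q.2.2) U} := by
    ext y
    simp
  rw [hset]
  exact ((isClosed_setOf_isNormalFrame.preimage continuous_snd).inter
    (isClosed_setOf_disjoint_frameHalfPlane hU)).isClosed_image_fst_of_isCompact
    (isCompact_closedBall 0 1) fun _ hq => hq.1.mem_closedBall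

end Frames

theorem halfPlane_mk'_span_range {n k : ℕ} (y : EuclideanSpace ℝ (Fin n))
    (e : Fin k → EuclideanSpace ℝ (Fin n)) (v : EuclideanSpace ℝ (Fin n)) :
    halfPlane (AffineSubspace.mk' y (Submodule.span ℝ (range e))) v = frameHalfPlane y e v := by
  ext z
  simp only [halfPlane, frameHalfPlane, AffineSubspace.mem_mk',
    Submodule.mem_span_range_iff_exists_fun, mem_ofPred_eq]
  constructor
  · rintro ⟨p, ⟨c, hc⟩, t, ht, rfl⟩
    exact ⟨c, t, ht, by rw [hc, vsub_eq_sub]; abel⟩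
  · rintro ⟨c, t, ht, rfl⟩
    exact ⟨y + ∑ j, c j • e j, ⟨c, by simp⟩, t, ht, rfl⟩

theorem exists_isNormalFrame_halfPlane_eq {n k : ℕ}
    {P : AffineSubspace ℝ (EuclideanSpace ℝ (Fin n))} {y v : EuclideanSpace ℝ (Fin n)}
    (hy : y ∈ P) (hk : Module.finrank ℝ P.direction = k) (hv : ‖v‖ = 1)
    (hvP : v ∈ P.directionᗮ) :
    ∃ e : Fin k → EuclideanSpace ℝ (Fin n),
      IsNormalFrame e v ∧ halfPlane P v = frameHalfPlane y e v := by
  obtain ⟨e, he, rfl⟩ := exists_orthonormal_eq_mk'_span hy hk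
  rw [AffineSubspace.direction_mk'] at hvP
  exact ⟨e, ⟨he, hv, mem_orthogonal_span_range_iff.1 hvP⟩, halfPlane_mk'_span_range y e v⟩

theorem stmt_2_general (n k : ℕ) (K : Set (EuclideanSpace ℝ (Fin n)))
    (h2 : ∀ x ∉ K, ∃ P : AffineSubspace ℝ (EuclideanSpace ℝ (Fin n)),
      ∃ v : EuclideanSpace ℝ (Fin n), x ∈ P ∧ Module.finrank ℝ P.direction = k ∧
        ‖v‖ = 1 ∧ v ∈ P.directionᗮ ∧ Disjoint (halfPlane P v) K) :
    ∀ x ∈ frontier K, ∃ P : AffineSubspace ℝ (EuclideanSpace ℝ (Fin n)),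
      ∃ v : EuclideanSpace ℝ (Fin n), x ∈ P ∧ Module.finrank ℝ P.direction = k ∧
        ‖v‖ = 1 ∧ v ∈ P.directionᗮ ∧ (halfPlane P v ∩ frontier K).Nonempty ∧
        Disjoint (halfPlane P v) (interior K) := by
  intro x hx
  have hcompl : Kᶜ ⊆ {y | ∃ (e : Fin k → EuclideanSpace ℝ (Fin n))
      (v : EuclideanSpace ℝ (Fin n)),
        IsNormalFrame e v ∧ Disjoint (frameHalfPlane y e v) (interior K)} := by
    intro y hy
    obtain ⟨P, v, hyP, hk, hv, hvP, hdisj⟩ := h2 y hy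
    obtain ⟨e, he, hPv⟩ := exists_isNormalFrame_halfPlane_eq hyP hk hv hvP
    exact ⟨e, v, he, hPv ▸ hdisj.mono_right interior_subset⟩
  have hx_closure : x ∈ closure Kᶜ := frontier_subset_closure (by rwa [frontier_compl])
  obtain ⟨e, v, ⟨he, hv, hev⟩, hdisj⟩ :=
    (isClosed_setOf_exists_disjoint_frameHalfPlane isOpen_interior).closure_subset_iff.2
      hcompl hx_closure
  refine ⟨AffineSubspace.mk' x (Submodule.span ℝ (range e)), v,
    AffineSubspace.self_mem_mk' _ _, ?_, hv, ?_, ⟨x, ?_, hx⟩, ?_⟩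
  · rw [AffineSubspace.direction_mk', finrank_span_range_orthonormal he]
  · rw [AffineSubspace.direction_mk']
    exact mem_orthogonal_span_range_iff.2 hev
  · rw [halfPlane_mk'_span_range]
    exact ⟨0, 0, le_rfl, by simp⟩
  · rwa [halfPlane_mk'_span_range]

/-- The class `K^k_2` is contained in the class `K^k_1`: if every point outside a compact
set `K` lies on a `k`-plane bounding a half-`(k+1)`-plane disjoint from `K`, then every
frontier point of `K` lies on a `k`-plane bounding a half-`(k+1)`-plane supporting `K`
(meeting the frontier and disjoint from the interior). -/
theorem stmt_2 (n k : ℕ) (K : Set (EuclideanSpace ℝ (Fin n))) (hK : IsCompact K)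
    (h2 : ∀ x ∉ K, ∃ P : AffineSubspace ℝ (EuclideanSpace ℝ (Fin n)),
      ∃ v : EuclideanSpace ℝ (Fin n), x ∈ P ∧ Module.finrank ℝ P.direction = k ∧
        ‖v‖ = 1 ∧ v ∈ P.directionᗮ ∧ Disjoint (halfPlane P v) K) :
    ∀ x ∈ frontier K, ∃ P : AffineSubspace ℝ (EuclideanSpace ℝ (Fin n)),
      ∃ v : EuclideanSpace ℝ (Fin n), x ∈ P ∧ Module.finrank ℝ P.direction = k ∧
        ‖v‖ = 1 ∧ v ∈ P.directionᗮ ∧ (halfPlane P v ∩ frontier K).Nonempty ∧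
        Disjoint (halfPlane P v) (interior K) :=
  stmt_2_general n k K h2
end

section
/- Let K be a compact set in E^n with the property that every point x ∉ K lies on a k-dimensional affine subspace disjoint from K (class K^k_2). Then the visual hull of K with respect to the family of all orthogonal projections onto (n-k)-dimensional linear subspaces equals K; that is, the set of points x ∈ E^n such that for every (n-k)-dimensional linear subspace P, the orthogonal projection of x onto P lies in the orthogonal projection of K onto P, is exactly K. -/
/-!
A point `x ∉ K` lies on a `k`-plane `A` missing `K`. Project orthogonally onto the
`(n-k)`-dimensional complement `A.directionᗮ`: its fibres are exactly the translates of
`A.direction`, so the fibre through `x` is `A`, and `x` projects outside the image of `K`.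
-/

namespace Submodule

variable {𝕜 E : Type*} [RCLike 𝕜] [NormedAddCommGroup E] [InnerProductSpace 𝕜 E]

theorem orthogonalProjectionOnto_eq_iff_sub_mem_orthogonal (U : Submodule 𝕜 E)
    [U.HasOrthogonalProjection] {x y : E} :
    U.orthogonalProjectionOnto x = U.orthogonalProjectionOnto y ↔ x - y ∈ Uᗮ := by
  rw [← sub_eq_zero, ← map_sub, orthogonalProjectionOnto_eq_zero_iff]

end Submodule

namespace AffineSubspace

variable {𝕜 E : Type*} [RCLike 𝕜] [NormedAddCommGroup E] [InnerProductSpace 𝕜 E]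

theorem mem_of_orthogonalProjectionOnto_direction_orthogonal_eq {A : AffineSubspace 𝕜 E}
    [A.direction.HasOrthogonalProjection] {x y : E} (hx : x ∈ A)
    (h : (A.directionᗮ.orthogonalProjectionOnto y : E) = A.directionᗮ.orthogonalProjectionOnto x) :
    y ∈ A := by
  rw [← Subtype.ext_iff, Submodule.orthogonalProjectionOnto_eq_iff_sub_mem_orthogonal,
    Submodule.orthogonal_orthogonal] at h
  simpa using vadd_mem_of_mem_direction h hx

end AffineSubspace

theorem stmt_4_general (n k : ℕ) (K : Set (EuclideanSpace ℝ (Fin n)))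
    (h2 : ∀ x ∉ K, ∃ P : AffineSubspace ℝ (EuclideanSpace ℝ (Fin n)), x ∈ P ∧
      Module.finrank ℝ P.direction = k ∧ ∀ y ∈ P, y ∉ K) :
    {x : EuclideanSpace ℝ (Fin n) |
      ∀ P : Submodule ℝ (EuclideanSpace ℝ (Fin n)), Module.finrank ℝ P = n - k →
        (P.orthogonalProjectionOnto x : EuclideanSpace ℝ (Fin n)) ∈
          (fun y => (P.orthogonalProjectionOnto y : EuclideanSpace ℝ (Fin n))) '' K} = K := by
  refine Set.Subset.antisymm (fun x hx => ?_) fun x hxK P _ => ⟨x, hxK, rfl⟩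
  by_contra hxK
  obtain ⟨A, hxA, hdim, hAK⟩ := h2 x hxK
  have hdim_orthogonal : Module.finrank ℝ A.directionᗮ = n - k := by
    have := A.direction.finrank_add_finrank_orthogonal
    rw [finrank_euclideanSpace_fin] at this
    omega
  obtain ⟨y, hyK, hy⟩ := hx _ hdim_orthogonal
  exact hAK y (AffineSubspace.mem_of_orthogonalProjectionOnto_direction_orthogonal_eq hxA hy) hyK

/-- If every point outside the compact set `K` lies on a `k`-dimensional affine subspace
disjoint from `K` (class `K^k_2`), then the visual hull of `K` with respect to all
orthogonal projections onto `(n-k)`-dimensional subspaces equals `K`. -/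
theorem stmt_4 (n k : ℕ) (K : Set (EuclideanSpace ℝ (Fin n))) (hK : IsCompact K)
    (h2 : ∀ x ∉ K, ∃ P : AffineSubspace ℝ (EuclideanSpace ℝ (Fin n)), x ∈ P ∧
      Module.finrank ℝ P.direction = k ∧ ∀ y ∈ P, y ∉ K) :
    {x : EuclideanSpace ℝ (Fin n) |
      ∀ P : Submodule ℝ (EuclideanSpace ℝ (Fin n)), Module.finrank ℝ P = n - k →
        (P.orthogonalProjectionOnto x : EuclideanSpace ℝ (Fin n)) ∈
          (fun y => (P.orthogonalProjectionOnto y : EuclideanSpace ℝ (Fin n))) '' K} = K :=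
  stmt_4_general n k K h2
end

section
/- Inclusion K^{k,ε}_2 ⊆ K^{k,ε}_1: let K be a compact body in E^n such that every point x ∉ K with dist(x, K) ≤ 1/ε lies on a k-sphere S^k(C, 1/ε) (boundary of a (k+1)-dimensional ball of radius 1/ε, with dist(C, K) ≤ 1/ε) disjoint from K. Then every point x in the frontier of K lies on a k-sphere S^k(C, 1/ε) that is disjoint from the interior of K (a supporting sphere of radius 1/ε). -/
/-!
A point of `E` lies on a `k`-sphere of radius `r` avoiding an open set `U` iff it is `C + f v`
for an isometric embedding `f` of Euclidean `(k+1)`-space, `‖v‖ = r`, and `C + f w ∉ U`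
whenever `‖w‖ = r`. These conditions on `(C, f, v)` are closed, and over a bounded set of points
the data `(C, f, v)` stay bounded in a finite-dimensional space, so the set of such points is
closed. Every frontier point of `K` is a limit of points outside `K` close to `K`, which by
hypothesis lie on spheres avoiding `K ⊇ interior K`.
-/

open Metric Set Bornology Module

theorem isClosed_image_of_isBounded_inter_preimage {X Y : Type*} [PseudoMetricSpace X]
    [ProperSpace X] [MetricSpace Y] {S : Set X} {g : X → Y} (hS : IsClosed S)
    (hg : Continuous g) (hb : ∀ y, IsBounded (S ∩ g ⁻¹' closedBall y 1)) :
    IsClosed (g '' S) := by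
  refine isClosed_of_closure_subset fun y hy => ?_
  have hcpt : IsCompact (g '' (S ∩ g ⁻¹' closedBall y 1)) :=
    (isCompact_of_isClosed_isBounded (hS.inter (isClosed_closedBall.preimage hg)) (hb y)).image hg
  have hy' : y ∈ closure (g '' (S ∩ g ⁻¹' closedBall y 1)) := by
    refine closure_mono ?_ (isOpen_ball.inter_closure ⟨mem_ball_self one_pos, hy⟩)
    rintro _ ⟨hball, p, hp, rfl⟩
    exact ⟨p, ⟨hp, ball_subset_closedBall hball⟩, rfl⟩
  exact image_mono inter_subset_left (hcpt.isClosed.closure_subset hy')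

theorem isClosed_setOf_exists_isometry_sphere_avoiding {E F : Type*} [NormedAddCommGroup E]
    [NormedSpace ℝ E] [FiniteDimensional ℝ E] [NormedAddCommGroup F] [NormedSpace ℝ F]
    [FiniteDimensional ℝ F] {r : ℝ} {U : Set E} (hU : IsOpen U) :
    IsClosed {x : E | ∃ C : E, ∃ f : F →ₗᵢ[ℝ] E,
      ∃ v, ‖v‖ = r ∧ x = C + f v ∧ ∀ w, ‖w‖ = r → C + f w ∉ U} := by
  -- Isometric embeddings form a closed bounded subset of the finite-dimensional `F →L[ℝ] E`.
  let S : Set (E × (F →L[ℝ] E) × F) :=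
    {p | (∀ w, ‖p.2.1 w‖ = ‖w‖) ∧ ‖p.2.2‖ = r ∧ ∀ w, ‖w‖ = r → p.1 + p.2.1 w ∉ U}
  have hS : {x : E | ∃ C : E, ∃ f : F →ₗᵢ[ℝ] E,
      ∃ v, ‖v‖ = r ∧ x = C + f v ∧ ∀ w, ‖w‖ = r → C + f w ∉ U} =
      (fun p => p.1 + p.2.1 p.2.2) '' S := by
    ext x
    constructor
    · rintro ⟨C, f, v, hv, rfl, hf⟩
      exact ⟨(C, f.toContinuousLinearMap, v), ⟨f.norm_map, hv, hf⟩, rfl⟩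
    · rintro ⟨⟨C, f, v⟩, ⟨hf, hv, hfU⟩, rfl⟩
      exact ⟨C, ⟨f.toLinearMap, hf⟩, v, hv, rfl, hfU⟩
  rw [hS]
  refine isClosed_image_of_isBounded_inter_preimage ?_ (by fun_prop) fun y => ?_
  · simp only [S, ofPred_and, ofPred_forall]
    refine (isClosed_iInter fun w => isClosed_eq (by fun_prop) (by fun_prop)).inter
      ((isClosed_eq (by fun_prop) continuous_const).inter
      (isClosed_iInter fun w => isClosed_iInter fun _ => hU.isClosed_compl.preimage
        (f := fun p : E × (F →L[ℝ] E) × F => p.1 + p.2.1 w) (by fun_prop)))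
  · refine (isBounded_closedBall (x := 0) (r := ‖y‖ + 1 + r)).prod
      ((isBounded_closedBall (x := 0) (r := 1)).prod (isBounded_closedBall (x := 0) (r := r)))
      |>.subset ?_
    rintro ⟨C, f, v⟩ ⟨⟨hf, hv, -⟩, hy⟩
    simp only [mem_preimage, mem_closedBall, dist_eq_norm] at hy
    simp only [mem_prod, mem_closedBall_zero_iff]
    refine ⟨?_, f.opNorm_le_bound zero_le_one fun w => by simp [hf], hv.le⟩
    calc ‖C‖ = ‖(C + f v - y) + y - f v‖ := by abel_nf
      _ ≤ ‖C + f v - y‖ + ‖y‖ + ‖f v‖ := norm_sub_le_of_le (norm_add_le _ _) le_rfl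
      _ ≤ ‖y‖ + 1 + r := by rw [hf, hv]; linarith

section Sphere

variable {E : Type*} [NormedAddCommGroup E] [InnerProductSpace ℝ E]

/-- `x` lies on a `k`-sphere `S^k(C, r)` (inside the `(k+1)`-flat `A`) disjoint from `U`. -/
def OnSphereAvoiding (k : ℕ) (r : ℝ) (U : Set E) (x : E) : Prop :=
  ∃ C : E, ∃ A : AffineSubspace ℝ E, C ∈ A ∧ x ∈ A ∧ finrank ℝ A.direction = k + 1 ∧
    dist x C = r ∧ ∀ y ∈ A, dist y C = r → y ∉ U

theorem OnSphereAvoiding.mono {k : ℕ} {r : ℝ} {U V : Set E} {x : E} (hUV : U ⊆ V)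
    (hx : OnSphereAvoiding k r V x) : OnSphereAvoiding k r U x := by
  obtain ⟨C, A, hCA, hxA, hrank, hxC, hA⟩ := hx
  exact ⟨C, A, hCA, hxA, hrank, hxC, fun y hyA hyC hyU => hA y hyA hyC (hUV hyU)⟩

theorem onSphereAvoiding_iff {k : ℕ} {r : ℝ} {U : Set E} {x : E} :
    OnSphereAvoiding k r U x ↔ ∃ C : E, ∃ f : EuclideanSpace ℝ (Fin (k + 1)) →ₗᵢ[ℝ] E,
      ∃ v, ‖v‖ = r ∧ x = C + f v ∧ ∀ w, ‖w‖ = r → C + f w ∉ U := by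
  constructor
  · rintro ⟨C, A, hCA, hxA, hrank, rfl, hA⟩
    have : FiniteDimensional ℝ A.direction := .of_finrank_eq_succ hrank
    let e := ((stdOrthonormalBasis ℝ A.direction).reindex (finCongr hrank)).repr.symm
    refine ⟨C, A.direction.subtypeₗᵢ.comp e.toLinearIsometry,
      e.symm ⟨x - C, by simpa using A.vsub_mem_direction hxA hCA⟩, ?_, ?_, fun w hw => ?_⟩
    · simp [dist_eq_norm]
    · simp
    · have hwA : C + (e w : E) ∈ A := by
        simpa [add_comm] using AffineSubspace.vadd_mem_of_mem_direction (e w).2 hCA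
      refine hA _ hwA ?_
      rw [dist_eq_norm, add_sub_cancel_left, ← hw, ← e.norm_map, Submodule.coe_norm]
      rfl
  · rintro ⟨C, f, v, hv, rfl, hf⟩
    refine ⟨C, .mk' C (LinearMap.range f.toLinearMap), AffineSubspace.self_mem_mk' _ _,
      by simp [AffineSubspace.mem_mk'], ?_, by simpa using hv, ?_⟩
    · rw [AffineSubspace.direction_mk', LinearMap.finrank_range_of_inj f.injective,
        finrank_euclideanSpace_fin]
    · intro y hyA hyC
      obtain ⟨w, hw⟩ := AffineSubspace.mem_mk'.1 hyA
      have hy : y = C + f w := by simp_all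
      refine hy ▸ hf w ?_
      rw [← f.norm_map, ← hyC, dist_eq_norm]
      simp_all

theorem isClosed_setOf_onSphereAvoiding [FiniteDimensional ℝ E] (k : ℕ) (r : ℝ) {U : Set E}
    (hU : IsOpen U) : IsClosed {x | OnSphereAvoiding k r U x} := by
  simpa only [onSphereAvoiding_iff] using
    isClosed_setOf_exists_isometry_sphere_avoiding (F := EuclideanSpace ℝ (Fin (k + 1))) hU

end Sphere

theorem frontier_subset_closure_infDist_lt_inter_compl {X : Type*} [PseudoMetricSpace X]
    {K : Set X} {δ : ℝ} (hδ : 0 < δ) : frontier K ⊆ closure ({z | infDist z K < δ} ∩ Kᶜ) := by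
  intro x hx
  have hxδ : infDist x K < δ := by rwa [infDist_zero_of_mem_closure hx.1]
  rw [frontier_eq_closure_inter_closure] at hx
  exact (isOpen_lt (continuous_infDist_pt K) continuous_const).inter_closure ⟨hxδ, hx.2⟩

theorem stmt_11_general (n k : ℕ) (ε : ℝ) (hε : 0 < ε) (K : Set (EuclideanSpace ℝ (Fin n)))
    (h2 : ∀ x ∉ K, Metric.infDist x K ≤ 1 / ε →
      ∃ C : EuclideanSpace ℝ (Fin n), Metric.infDist C K ≤ 1 / ε ∧
        ∃ A : AffineSubspace ℝ (EuclideanSpace ℝ (Fin n)),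
          C ∈ A ∧ x ∈ A ∧ Module.finrank ℝ A.direction = k + 1 ∧ dist x C = 1 / ε ∧
          ∀ y ∈ A, dist y C = 1 / ε → y ∉ K) :
    ∀ x ∈ frontier K,
      ∃ C : EuclideanSpace ℝ (Fin n), ∃ A : AffineSubspace ℝ (EuclideanSpace ℝ (Fin n)),
        C ∈ A ∧ x ∈ A ∧ Module.finrank ℝ A.direction = k + 1 ∧ dist x C = 1 / ε ∧
        ∀ y ∈ A, dist y C = 1 / ε → y ∉ interior K := by
  intro x hx
  have hnear : {z | infDist z K < 1 / ε} ∩ Kᶜ ⊆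
      {z | OnSphereAvoiding k (1 / ε) (interior K) z} := by
    rintro z ⟨hzε, hzK⟩
    obtain ⟨C, -, hC⟩ := h2 z hzK hzε.le
    exact OnSphereAvoiding.mono interior_subset ⟨C, hC⟩
  exact closure_minimal hnear (isClosed_setOf_onSphereAvoiding k _ isOpen_interior)
    (frontier_subset_closure_infDist_lt_inter_compl (by positivity) hx)

/-- Inclusion `K^{k,ε}_2 ⊆ K^{k,ε}_1`: if every point `x ∉ K` with `dist(x,K) ≤ 1/ε` lies
on a `k`-sphere of radius `1/ε` (with center `C` satisfying `dist(C,K) ≤ 1/ε`) disjoint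
from `K`, then every frontier point of `K` lies on a `k`-sphere of radius `1/ε` disjoint
from the interior of `K` (a supporting sphere). -/
theorem stmt_11 (n k : ℕ) (ε : ℝ) (hε : 0 < ε) (K : Set (EuclideanSpace ℝ (Fin n)))
    (hcomp : IsCompact K) (hbody : K = closure (interior K)) (hint : (interior K).Nonempty)
    (h2 : ∀ x ∉ K, Metric.infDist x K ≤ 1 / ε →
      ∃ C : EuclideanSpace ℝ (Fin n), Metric.infDist C K ≤ 1 / ε ∧
        ∃ A : AffineSubspace ℝ (EuclideanSpace ℝ (Fin n)),
          C ∈ A ∧ x ∈ A ∧ Module.finrank ℝ A.direction = k + 1 ∧ dist x C = 1 / ε ∧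
          ∀ y ∈ A, dist y C = 1 / ε → y ∉ K) :
    ∀ x ∈ frontier K,
      ∃ C : EuclideanSpace ℝ (Fin n), ∃ A : AffineSubspace ℝ (EuclideanSpace ℝ (Fin n)),
        C ∈ A ∧ x ∈ A ∧ Module.finrank ℝ A.direction = k + 1 ∧ dist x C = 1 / ε ∧
        ∀ y ∈ A, dist y C = 1 / ε → y ∉ interior K :=
  stmt_11_general n k ε hε K h2
end

section
/- Let V₁ and V₂ be compact bodies in E^n (n > 2) of class K^k_2 with n − k > 1. If the orthogonal projections of V₁ and V₂ onto every (n−k)-dimensional linear subspace coincide, then V₁ = V₂. -/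
open Module

/- Every set lies in its visual hull, the intersection of the cylinders `π_W⁻¹(π_W A)` over the
`(n-k)`-dimensional subspaces `W`, and equal projections give equal visual hulls. For a set of
class `K^k_2` the visual hull is the set itself: a point `x` outside it lies on a `k`-flat `P`
missing the set, and the cylinder over `W = P.directionᗮ` through `x` is exactly `P`. -/

variable {E : Type*} [NormedAddCommGroup E] [InnerProductSpace ℝ E]

theorem Submodule.orthogonalProjectionOnto_orthogonal_eq_iff (D : Submodule ℝ E)
    [D.HasOrthogonalProjection] {x y : E} :
    Dᗮ.orthogonalProjectionOnto y = Dᗮ.orthogonalProjectionOnto x ↔ y - x ∈ D := by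
  rw [← sub_eq_zero, ← map_sub, Submodule.orthogonalProjectionOnto_eq_zero_iff,
    Submodule.orthogonal_orthogonal]

theorem AffineSubspace.mem_of_orthogonalProjectionOnto_eq {P : AffineSubspace ℝ E}
    [P.direction.HasOrthogonalProjection] {x y : E} (hx : x ∈ P)
    (h : P.directionᗮ.orthogonalProjectionOnto y = P.directionᗮ.orthogonalProjectionOnto x) :
    y ∈ P := by
  have hyx : y - x ∈ P.direction := P.direction.orthogonalProjectionOnto_orthogonal_eq_iff.mp h
  simpa using AffineSubspace.vadd_mem_of_mem_direction hyx hx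

/-- Membership in the class `K^k_2`. -/
def IsAvoidedByFlats (k : ℕ) (B : Set E) : Prop :=
  ∀ x ∉ B, ∃ P : AffineSubspace ℝ E,
    x ∈ P ∧ finrank ℝ P.direction = k ∧ ∀ y ∈ P, y ∉ B

variable [FiniteDimensional ℝ E]

def visualHull (m : ℕ) (A : Set E) : Set E :=
  ⋂ (W : Submodule ℝ E) (_ : finrank ℝ W = m),
    (fun y => (W.orthogonalProjectionOnto y : E)) ⁻¹'
      ((fun y => (W.orthogonalProjectionOnto y : E)) '' A)

theorem subset_visualHull (m : ℕ) (A : Set E) : A ⊆ visualHull m A :=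
  Set.subset_iInter₂ fun _ _ => Set.subset_preimage_image _ A

theorem visualHull_congr {m : ℕ} {A B : Set E}
    (h : ∀ W : Submodule ℝ E, finrank ℝ W = m →
      (fun y => (W.orthogonalProjectionOnto y : E)) '' A =
        (fun y => (W.orthogonalProjectionOnto y : E)) '' B) :
    visualHull m A = visualHull m B :=
  Set.iInter₂_congr fun W hW => by rw [h W hW]

theorem visualHull_subset {k : ℕ} {B : Set E}
    (hB : IsAvoidedByFlats k B) :
    visualHull (finrank ℝ E - k) B ⊆ B := by
  intro x hx
  by_contra hxB
  obtain ⟨P, hxP, hdim, hdisj⟩ := hB x hxB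
  have hdimW : finrank ℝ P.directionᗮ = finrank ℝ E - k := by
    have := P.direction.finrank_add_finrank_orthogonal
    omega
  obtain ⟨y, hyB, hyx⟩ := Set.mem_iInter₂.mp hx P.directionᗮ hdimW
  exact hdisj y (P.mem_of_orthogonalProjectionOnto_eq hxP (Subtype.coe_injective hyx)) hyB

theorem visualHull_eq_self {k : ℕ} {B : Set E}
    (hB : IsAvoidedByFlats k B) :
    visualHull (finrank ℝ E - k) B = B :=
  (visualHull_subset hB).antisymm (subset_visualHull _ B)

theorem stmt_13_general (n k : ℕ)
    (V₁ V₂ : Set (EuclideanSpace ℝ (Fin n)))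
    (h₁ : ∀ x ∉ V₁, ∃ P : AffineSubspace ℝ (EuclideanSpace ℝ (Fin n)), x ∈ P ∧
      Module.finrank ℝ P.direction = k ∧ ∀ y ∈ P, y ∉ V₁)
    (h₂ : ∀ x ∉ V₂, ∃ P : AffineSubspace ℝ (EuclideanSpace ℝ (Fin n)), x ∈ P ∧
      Module.finrank ℝ P.direction = k ∧ ∀ y ∈ P, y ∉ V₂)
    (hproj : ∀ P : Submodule ℝ (EuclideanSpace ℝ (Fin n)), Module.finrank ℝ P = n - k →
      (fun y => (P.orthogonalProjectionOnto y : EuclideanSpace ℝ (Fin n))) '' V₁ =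
        (fun y => (P.orthogonalProjectionOnto y : EuclideanSpace ℝ (Fin n))) '' V₂) :
    V₁ = V₂ := by
  rw [← visualHull_eq_self h₁, ← visualHull_eq_self h₂, finrank_euclideanSpace_fin]
  exact visualHull_congr hproj

/-- Two compact bodies of class `K^k_2` in `E^n` (`n > 2`, `n - k > 1`) with equal
orthogonal projections onto every `(n-k)`-dimensional subspace are equal. -/
theorem stmt_13 (n k : ℕ) (hn : 2 < n) (hnk : 1 < n - k)
    (V₁ V₂ : Set (EuclideanSpace ℝ (Fin n)))
    (hcomp₁ : IsCompact V₁) (hbody₁ : V₁ = closure (interior V₁))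
    (hint₁ : (interior V₁).Nonempty)
    (hcomp₂ : IsCompact V₂) (hbody₂ : V₂ = closure (interior V₂))
    (hint₂ : (interior V₂).Nonempty)
    (h₁ : ∀ x ∉ V₁, ∃ P : AffineSubspace ℝ (EuclideanSpace ℝ (Fin n)), x ∈ P ∧
      Module.finrank ℝ P.direction = k ∧ ∀ y ∈ P, y ∉ V₁)
    (h₂ : ∀ x ∉ V₂, ∃ P : AffineSubspace ℝ (EuclideanSpace ℝ (Fin n)), x ∈ P ∧
      Module.finrank ℝ P.direction = k ∧ ∀ y ∈ P, y ∉ V₂)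
    (hproj : ∀ P : Submodule ℝ (EuclideanSpace ℝ (Fin n)), Module.finrank ℝ P = n - k →
      (fun y => (P.orthogonalProjectionOnto y : EuclideanSpace ℝ (Fin n))) '' V₁ =
        (fun y => (P.orthogonalProjectionOnto y : EuclideanSpace ℝ (Fin n))) '' V₂) :
    V₁ = V₂ :=
  stmt_13_general n k V₁ V₂ h₁ h₂ hproj
end

section
/- Small bodies of class K^{k,ε}_2 equal their ε-visual hull: let K be a compact body in E^n with diam K < 1/ε and suppose every point x ∉ K with dist(x, K) ≤ 1/ε lies on a k-sphere S^k(C, 1/ε) (with dist(C, K) ≤ 1/ε) disjoint from K. Then for every x ∉ K there exists a center C with dist(C,K) ≤ 1/ε and a k-sphere of radius 1/ε through x centered at C disjoint from K; consequently x does not belong to the ε-visual hull of K and the ε-visual hull of K equals K. -/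
/-!
Exterior points within `1/ε` of `K` are covered by the hypothesis. A point `x` farther than
`1/ε` from `K` is farther from any `p ∈ K` than `diam K`, so every sphere centred at `p` through
`x` misses `K`; a `(k+1)`-plane through `p` and `x` exists because, by the intermediate value
theorem, some point lies at distance exactly `1/ε` from `K`, and the plane the hypothesis gives
there forces `k + 1 ≤ n`.
-/

open Metric Module

theorem Submodule.exists_le_finrank_eq {K V : Type*} [DivisionRing K] [AddCommGroup V]
    [Module K V] [Module.Finite K V] (W : Submodule K V) {d : ℕ} (hWd : finrank K W ≤ d)
    (hd : d ≤ finrank K V) : ∃ W' : Submodule K V, W ≤ W' ∧ finrank K W' = d := by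
  induction d, hWd using Nat.le_induction with
  | base => exact ⟨W, le_rfl, rfl⟩
  | succ m _ ih =>
    obtain ⟨W', hWW', hW'⟩ := ih (Nat.le_of_succ_le hd)
    obtain ⟨v, -, hv⟩ := SetLike.exists_of_lt (lt_top_of_finrank_lt_finrank (hW' ▸ hd))
    exact ⟨W' ⊔ K ∙ v, hWW'.trans le_sup_left, by rw [finrank_sup_span_singleton hv, hW']⟩

theorem AffineSubspace.exists_mem_mem_finrank_direction_eq {K V P : Type*} [DivisionRing K]
    [AddCommGroup V] [Module K V] [Module.Finite K V] [AddTorsor V P] {p x : P} (hxp : x ≠ p)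
    {d : ℕ} (hd₀ : 1 ≤ d) (hd : d ≤ finrank K V) :
    ∃ A : AffineSubspace K P, p ∈ A ∧ x ∈ A ∧ finrank K A.direction = d := by
  obtain ⟨W, hW, hWd⟩ := (K ∙ (x -ᵥ p)).exists_le_finrank_eq
    ((finrank_span_singleton (vsub_ne_zero.2 hxp)).trans_le hd₀) hd
  refine ⟨mk' p W, self_mem_mk' p W, ?_, by rwa [direction_mk']⟩
  exact (mem_mk').2 (hW (Submodule.mem_span_singleton_self _))

theorem Metric.nonempty_of_infDist_pos {X : Type*} [PseudoMetricSpace X] {K : Set X} {x : X}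
    (h : 0 < infDist x K) : K.Nonempty :=
  Set.nonempty_iff_ne_empty.2 fun hK => by simp [hK] at h

theorem Metric.exists_infDist_eq {X : Type*} [PseudoMetricSpace X] [PreconnectedSpace X]
    {K : Set X} {p x : X} (hp : p ∈ K) {r : ℝ} (hr : 0 ≤ r) (hrx : r ≤ infDist x K) :
    ∃ z, infDist z K = r :=
  intermediate_value_univ p x (continuous_infDist_pt K) ⟨(infDist_zero_of_mem hp).trans_le hr, hrx⟩

theorem exists_sphere_disjoint_of_diam_lt_infDist {V : Type*} [NormedAddCommGroup V]
    [NormedSpace ℝ V] [FiniteDimensional ℝ V] {K : Set V} (hK : Bornology.IsBounded K) {x : V}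
    (hx : diam K < infDist x K) {d : ℕ} (hd₀ : 1 ≤ d) (hd : d ≤ finrank ℝ V) :
    ∃ C ∈ K, ∃ A : AffineSubspace ℝ V, C ∈ A ∧ x ∈ A ∧ finrank ℝ A.direction = d ∧
      ∀ y ∈ A, dist y C = dist x C → y ∉ K := by
  obtain ⟨C, hC⟩ := nonempty_of_infDist_pos (diam_nonneg.trans_lt hx)
  have hxC : x ≠ C := by
    rintro rfl
    exact (diam_nonneg.trans_lt hx).ne' (infDist_zero_of_mem hC)
  obtain ⟨A, hCA, hxA, hA⟩ :=
    AffineSubspace.exists_mem_mem_finrank_direction_eq (K := ℝ) hxC hd₀ hd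
  refine ⟨C, hC, A, hCA, hxA, hA, fun y _ hy hyK => ?_⟩
  exact lt_irrefl _ <| calc
    dist x C = dist y C := hy.symm
    _ ≤ diam K := dist_le_diam_of_mem hK hyK hC
    _ < infDist x K := hx
    _ ≤ dist x C := infDist_le_dist_of_mem hC

theorem stmt_17_general (n k : ℕ) (ε : ℝ) (K : Set (EuclideanSpace ℝ (Fin n)))
    (hcomp : IsCompact K)
    (hdiam : Metric.diam K < 1 / ε)
    (h2 : ∀ x ∉ K, Metric.infDist x K ≤ 1 / ε →
      ∃ C : EuclideanSpace ℝ (Fin n), Metric.infDist C K ≤ 1 / ε ∧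
        ∃ A : AffineSubspace ℝ (EuclideanSpace ℝ (Fin n)),
          C ∈ A ∧ x ∈ A ∧ Module.finrank ℝ A.direction = k + 1 ∧ dist x C = 1 / ε ∧
          ∀ y ∈ A, dist y C = 1 / ε → y ∉ K) :
    (∀ x ∉ K,
      ∃ C : EuclideanSpace ℝ (Fin n), Metric.infDist C K ≤ 1 / ε ∧
        ∃ A : AffineSubspace ℝ (EuclideanSpace ℝ (Fin n)),
          C ∈ A ∧ x ∈ A ∧ Module.finrank ℝ A.direction = k + 1 ∧
          ∀ y ∈ A, dist y C = dist x C → y ∉ K) ∧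
    {x : EuclideanSpace ℝ (Fin n) |
      ∀ C : EuclideanSpace ℝ (Fin n), Metric.infDist C K ≤ 1 / ε →
        ∀ A : AffineSubspace ℝ (EuclideanSpace ℝ (Fin n)),
          C ∈ A → x ∈ A → Module.finrank ℝ A.direction = k + 1 →
          ∃ y ∈ A, dist y C = dist x C ∧ y ∈ K} = K := by
  have hr : 0 < 1 / ε := diam_nonneg.trans_lt hdiam
  have exterior : ∀ x ∉ K,
      ∃ C : EuclideanSpace ℝ (Fin n), Metric.infDist C K ≤ 1 / ε ∧
        ∃ A : AffineSubspace ℝ (EuclideanSpace ℝ (Fin n)),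
          C ∈ A ∧ x ∈ A ∧ Module.finrank ℝ A.direction = k + 1 ∧
          ∀ y ∈ A, dist y C = dist x C → y ∉ K := by
    intro x hx
    rcases le_or_gt (infDist x K) (1 / ε) with hnear | hfar
    · obtain ⟨C, hC, A, hCA, hxA, hA, hxC, hsphere⟩ := h2 x hx hnear
      exact ⟨C, hC, A, hCA, hxA, hA, fun y hyA hy => hsphere y hyA (hy.trans hxC)⟩
    obtain ⟨p, hp⟩ := nonempty_of_infDist_pos (hr.trans hfar)
    obtain ⟨z, hz⟩ := exists_infDist_eq hp hr.le hfar.le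
    obtain ⟨-, -, A, -, -, hA, -⟩ := h2 z (fun hzK => hr.ne' (hz ▸ infDist_zero_of_mem hzK)) hz.le
    obtain ⟨C, hC, A, hCA, hxA, hA, hsphere⟩ := exists_sphere_disjoint_of_diam_lt_infDist
      hcomp.isBounded (hdiam.trans hfar) k.succ_pos (hA.symm.trans_le A.direction.finrank_le)
    exact ⟨C, (infDist_zero_of_mem hC).trans_le hr.le, A, hCA, hxA, hA, hsphere⟩
  refine ⟨exterior, Set.ext fun x => ⟨fun hx => ?_, fun hxK C _ A _ hxA _ => ⟨x, hxA, rfl, hxK⟩⟩⟩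
  by_contra hxK
  obtain ⟨C, hC, A, hCA, hxA, hA, hsphere⟩ := exterior x hxK
  obtain ⟨y, hyA, hy, hyK⟩ := hx C hC A hCA hxA hA
  exact hsphere y hyA hy hyK

/-- Small bodies of class `K^{k,ε}_2` equal their `ε`-visual hull: if `diam K < 1/ε` and
every exterior point at distance at most `1/ε` from `K` lies on a `k`-sphere of radius
`1/ε` (centered at an admissible center) disjoint from `K`, then every exterior point lies
on an admissible `k`-sphere fiber disjoint from `K`, and the `ε`-visual hull of `K`
(the set of points all of whose admissible `k`-sphere fibers meet `K`) equals `K`. -/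
theorem stmt_17 (n k : ℕ) (ε : ℝ) (hε : 0 < ε) (K : Set (EuclideanSpace ℝ (Fin n)))
    (hcomp : IsCompact K) (hbody : K = closure (interior K)) (hint : (interior K).Nonempty)
    (hdiam : Metric.diam K < 1 / ε)
    (h2 : ∀ x ∉ K, Metric.infDist x K ≤ 1 / ε →
      ∃ C : EuclideanSpace ℝ (Fin n), Metric.infDist C K ≤ 1 / ε ∧
        ∃ A : AffineSubspace ℝ (EuclideanSpace ℝ (Fin n)),
          C ∈ A ∧ x ∈ A ∧ Module.finrank ℝ A.direction = k + 1 ∧ dist x C = 1 / ε ∧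
          ∀ y ∈ A, dist y C = 1 / ε → y ∉ K) :
    (∀ x ∉ K,
      ∃ C : EuclideanSpace ℝ (Fin n), Metric.infDist C K ≤ 1 / ε ∧
        ∃ A : AffineSubspace ℝ (EuclideanSpace ℝ (Fin n)),
          C ∈ A ∧ x ∈ A ∧ Module.finrank ℝ A.direction = k + 1 ∧
          ∀ y ∈ A, dist y C = dist x C → y ∉ K) ∧
    {x : EuclideanSpace ℝ (Fin n) |
      ∀ C : EuclideanSpace ℝ (Fin n), Metric.infDist C K ≤ 1 / ε →
        ∀ A : AffineSubspace ℝ (EuclideanSpace ℝ (Fin n)),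
          C ∈ A → x ∈ A → Module.finrank ℝ A.direction = k + 1 →
          ∃ y ∈ A, dist y C = dist x C ∧ y ∈ K} = K :=
  stmt_17_general n k ε K hcomp hdiam h2
end
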